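/- For every positive integer d, let K be the (d-1)-skeleton of the simplex on vertex set {1,...,d+3} together with the two d-dimensional faces {1,2,...,d+1} and {3,4,...,d+3}. Then K is not shellable. -/

import Mathlib

open Finset

variable {V : Type*} [DecidableEq V]

/-- A (finite abstract) simplicial complex: a finset of finsets closed under subsets. -/
def IsComplex (K : Finset (Finset V)) : Prop :=
  ∀ F ∈ K, ∀ G ⊆ F, G ∈ K

/-- The facets (maximal faces) of a complex. -/
def facets (K : Finset (Finset V)) : Finset (Finset V) := by
  classical exact K.filter (fun F => ∀ G ∈ K, F ⊆ G → F = G)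

/-- `L` is a shelling order of the facets of `K`: for each `i ≥ 2` (0-indexed `i ≥ 1`),
the intersection of the closed simplex on `F_i` with the union of the previous closed simplices
is pure of dimension `dim F_i - 1`: every face `G` of the intersection is contained in a face `H`
of the intersection with `H.card = F_i.card - 1`. -/
def IsShelling (K : Finset (Finset V)) (L : List (Finset V)) : Prop :=
  L.Nodup ∧ L.toFinset = facets K ∧
  ∀ i : Fin L.length, i.1 ≠ 0 → ∀ G ⊆ L.get i,
    (∃ j : Fin L.length, j < i ∧ G ⊆ L.get j) →
    ∃ H, G ⊆ H ∧ H ⊆ L.get i ∧ H.card + 1 = (L.get i).card ∧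
      ∃ j : Fin L.length, j < i ∧ H ⊆ L.get j

/-- A complex is shellable if it admits a shelling order of its facets. -/
def Shellable (K : Finset (Finset V)) : Prop := ∃ L, IsShelling K L

/-- The subcomplex of `K` induced by a vertex subset `U`. -/
def inducedSub (K : Finset (Finset V)) (U : Finset V) : Finset (Finset V) :=
  K.filter (fun F => F ⊆ U)

/-- The vertex set of a complex. -/
def verts (K : Finset (Finset V)) : Finset V := K.sup id

/-- The link of a vertex `v` in `K`. -/
def link (K : Finset (Finset V)) (v : V) : Finset (Finset V) :=
  K.filter (fun F => v ∉ F ∧ insert v F ∈ K)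

/-- A complex is pure if all of its facets have the same dimension. -/
def IsPure (K : Finset (Finset V)) : Prop :=
  ∀ F ∈ facets K, ∀ G ∈ facets K, F.card = G.card

/-- The `(d-1)`-skeleton of the simplex on vertex set `{1, ..., n}` (in `ℕ`):
all subsets of cardinality at most `d`. -/
def skel (n d : ℕ) : Finset (Finset ℕ) :=
  (Finset.Icc 1 n).powerset.filter (fun F => F.card ≤ d)

/-- The `(d-1)`-skeleton of the simplex on `{1, ..., d+3}` together with the two `d`-faces
`{1, ..., d+1}` and `{3, ..., d+3}` is not shellable. -/
lemma mem_facets_iff (K : Finset (Finset V)) (F : Finset V) :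
    F ∈ facets K ↔ F ∈ K ∧ ∀ G ∈ K, F ⊆ G → F = G := by
  classical
  simp [facets]

lemma first_facet {K : Finset (Finset ℕ)} {L : List (Finset ℕ)} (hsh : IsShelling K L)
    (C : Finset ℕ) (hC : C ∈ facets K)
    (hkey : ∀ F ∈ facets K, ∀ H, H ⊆ C → H.card + 1 = C.card → H ⊆ F → F = C) :
    ∃ i : Fin L.length, L.get i = C ∧ i.1 = 0 := by
  obtain ⟨hnd, hf, hs⟩ := hsh
  have hmem : C ∈ L := by rw [← List.mem_toFinset, hf]; exact hC
  obtain ⟨i, hi⟩ := List.mem_iff_get.1 hmem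
  refine ⟨i, hi, ?_⟩
  by_contra h0
  have hpos : 0 < i.1 := Nat.pos_of_ne_zero h0
  have h0lt : (0 : ℕ) < L.length := lt_of_le_of_lt (Nat.zero_le _) i.2
  obtain ⟨H, -, hHC, hHcard, j, hj, hHj⟩ :=
    hs i h0 ∅ (Finset.empty_subset _)
      ⟨⟨0, h0lt⟩, by simpa [Fin.lt_def] using hpos, Finset.empty_subset _⟩
  rw [hi] at hHC hHcard
  have hjfac : L.get j ∈ facets K := by
    rw [← hf]; exact List.mem_toFinset.2 (List.get_mem L j)
  have heq : L.get j = C := hkey _ hjfac H hHC hHcard hHj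
  have hji : j = i := hnd.get_inj_iff.1 (heq.trans hi.symm)
  rw [hji] at hj
  exact lt_irrefl _ hj

theorem stmt3 (d : ℕ) (hd : 0 < d) :
    ¬ Shellable (skel (d + 3) d ∪ {Finset.Icc 1 (d + 1), Finset.Icc 3 (d + 3)}) := by
  rintro ⟨L, hL⟩
  set A := Finset.Icc 1 (d + 1) with hA
  set B := Finset.Icc 3 (d + 3) with hB
  set K := skel (d + 3) d ∪ ({A, B} : Finset (Finset ℕ)) with hK
  have hAcard : A.card = d + 1 := by rw [hA, Nat.card_Icc]; omega
  have hBcard : B.card = d + 1 := by rw [hB, Nat.card_Icc]; omega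
  have h1A : (1 : ℕ) ∈ A := by rw [hA, Finset.mem_Icc]; omega
  have h1B : (1 : ℕ) ∉ B := by rw [hB, Finset.mem_Icc]; omega
  have h3A : (d + 3 : ℕ) ∉ A := by rw [hA, Finset.mem_Icc]; omega
  have h3B : (d + 3 : ℕ) ∈ B := by rw [hB, Finset.mem_Icc]; omega
  have hABint : (A ∩ B).card = d - 1 := by
    have : A ∩ B = Finset.Icc 3 (d + 1) := by
      ext x; simp only [hA, hB, Finset.mem_inter, Finset.mem_Icc]; omega
    rw [this, Nat.card_Icc]; omega
  have hAK : A ∈ K := Finset.mem_union_right _ (Finset.mem_insert_self _ _)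
  have hBK : B ∈ K :=
    Finset.mem_union_right _ (Finset.mem_insert_of_mem (Finset.mem_singleton_self _))
  have hmemK : ∀ G ∈ K, G.card ≤ d ∨ G = A ∨ G = B := by
    intro G hG
    rcases Finset.mem_union.1 hG with h | h
    · left; exact (Finset.mem_filter.1 h).2
    · right
      rcases Finset.mem_insert.1 h with h | h
      · left; exact h
      · right; exact Finset.mem_singleton.1 h
  have hAfac : A ∈ facets K := by
    rw [mem_facets_iff]
    refine ⟨hAK, fun G hG hAG => ?_⟩
    rcases hmemK G hG with h | rfl | rfl
    · have := Finset.card_le_card hAG; omega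
    · rfl
    · exact absurd (hAG h1A) h1B
  have hBfac : B ∈ facets K := by
    rw [mem_facets_iff]
    refine ⟨hBK, fun G hG hBG => ?_⟩
    rcases hmemK G hG with h | rfl | rfl
    · have := Finset.card_le_card hBG; omega
    · exact absurd (hBG h3B) h3A
    · rfl
  have hkeyA : ∀ F ∈ facets K, ∀ H, H ⊆ A → H.card + 1 = A.card → H ⊆ F → F = A := by
    intro F hF H hHA hHc hHF
    rw [mem_facets_iff] at hF
    obtain ⟨hFK, hFmax⟩ := hF
    rcases hmemK F hFK with h | rfl | rfl
    · have hHeq : H = F := Finset.eq_of_subset_of_card_le hHF (by omega)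
      exact hFmax A hAK (hHeq ▸ hHA)
    · rfl
    · exfalso
      have := Finset.card_le_card (Finset.subset_inter hHA hHF)
      omega
  have hkeyB : ∀ F ∈ facets K, ∀ H, H ⊆ B → H.card + 1 = B.card → H ⊆ F → F = B := by
    intro F hF H hHB hHc hHF
    rw [mem_facets_iff] at hF
    obtain ⟨hFK, hFmax⟩ := hF
    rcases hmemK F hFK with h | rfl | rfl
    · have hHeq : H = F := Finset.eq_of_subset_of_card_le hHF (by omega)
      exact hFmax B hBK (hHeq ▸ hHB)
    · exfalso
      have := Finset.card_le_card (Finset.subset_inter hHF hHB)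
      omega
    · rfl
  obtain ⟨iA, hiA, hiA0⟩ := first_facet hL A hAfac hkeyA
  obtain ⟨iB, hiB, hiB0⟩ := first_facet hL B hBfac hkeyB
  have hii : iA = iB := Fin.ext (hiA0.trans hiB0.symm)
  have hABeq : A = B := by rw [← hiA, hii, hiB]
  exact h1B (hABeq ▸ h1A)
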